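/- Let m, n ≥ 1 and let r : ℝ^m → ℝ^n be twice continuously differentiable on an open set U ⊆ ℝ^m. Let ξ ∈ U, let s ∈ ℝ^m be a unit vector, let h > 0, and assume Dr(ξ)s ≠ 0. Set α = h / ‖Dr(ξ)s‖ and η = ξ + α s, and assume the segment from ξ to η is contained in U. Then the node-spacing error Δh(ξ,s) = h − ‖r(η) − r(ξ)‖ satisfies |Δh(ξ,s)| ≤ (√n / 2) · h² · (max over components i = 1,…,n of sup_{θ ∈ [0,α]} |D²r_i(ξ + θ s)(s, s)|) / ‖Dr(ξ)s‖², where r_i denotes the i-th coordinate function of r, Dr(ξ) its (Fréchet) derivative at ξ, and D²r_i(ζ)(s,s) the second derivative of r_i at ζ evaluated twice in direction s. -/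

import Mathlib

/-!
Since `‖α • Dr(ξ)s‖ = h`, the reverse triangle inequality bounds `|Δh|` by the norm of the
first-order Taylor remainder `r(ξ + αs) - r(ξ) - α Dr(ξ)s`. Taylor's theorem with Lagrange
remainder, applied to each component `t ↦ rᵢ(ξ + ts)` on `[0, α]`, bounds every entry of that
remainder by `α²/2` times the supremum `M` of the second directional derivatives, and a vector of
`ℝⁿ` with entries bounded by `B` has norm at most `√n B`.
Finally `α² = h² / ‖Dr(ξ)s‖²`.
-/

open Set

section LineRestriction

variable {E F : Type*} [NormedAddCommGroup E] [NormedSpace ℝ E]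
  [NormedAddCommGroup F] [NormedSpace ℝ F] {f : E → F} {x v : E} {t : ℝ}

theorem hasDerivAt_comp_add_smul (hf : DifferentiableAt ℝ f (x + t • v)) :
    HasDerivAt (fun t : ℝ => f (x + t • v)) (fderiv ℝ f (x + t • v) v) t := by
  have hline : HasDerivAt (fun t : ℝ => x + t • v) v t := by
    simpa using ((hasDerivAt_id t).smul_const v).const_add x
  exact hf.hasFDerivAt.comp_hasDerivAt t hline

theorem hasDerivAt_fderiv_comp_add_smul (hf : DifferentiableAt ℝ (fderiv ℝ f) (x + t • v)) :
    HasDerivAt (fun t : ℝ => fderiv ℝ f (x + t • v) v)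
      (iteratedFDeriv ℝ 2 f (x + t • v) ![v, v]) t := by
  rw [iteratedFDeriv_two_apply]
  exact (ContinuousLinearMap.apply ℝ F v).hasFDerivAt.comp_hasDerivAt t
    (hasDerivAt_comp_add_smul hf)

end LineRestriction

theorem add_smul_mem_segment {E : Type*} [AddCommGroup E] [Module ℝ E] {x v : E} {a t : ℝ}
    (ha : 0 < a) (ht : t ∈ Icc 0 a) : x + t • v ∈ segment ℝ x (x + a • v) := by
  rw [segment_eq_image']
  refine ⟨t / a, ⟨div_nonneg ht.1 ha.le, div_le_one_of_le₀ ht.2 ha.le⟩, ?_⟩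
  simp only [add_sub_cancel_left, smul_smul, div_mul_cancel₀ _ ha.ne']

section TaylorAlongSegment

variable {E : Type*} [NormedAddCommGroup E] [NormedSpace ℝ E] {f : E → ℝ} {U : Set E}
  {x v : E} {a : ℝ}

theorem exists_taylor_mean_remainder_lagrange_add_smul (hU : IsOpen U)
    (hf : ContDiffOn ℝ 2 f U) (ha : 0 < a) (hseg : segment ℝ x (x + a • v) ⊆ U) :
    ∃ θ ∈ Ioo 0 a, f (x + a • v) - f x - a * fderiv ℝ f x v =
      a ^ 2 / 2 * iteratedFDeriv ℝ 2 f (x + θ • v) ![v, v] := by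
  set c : ℝ → E := fun t => x + t • v
  set V : Set ℝ := c ⁻¹' U
  have hVopen : IsOpen V := hU.preimage (by fun_prop)
  have hIccV : Icc 0 a ⊆ V := fun t ht => hseg (add_smul_mem_segment ha ht)
  have hf1 : DifferentiableOn ℝ f U := hf.differentiableOn (by norm_num)
  have hf2 : DifferentiableOn ℝ (fderiv ℝ f) U :=
    (hf.fderiv_of_isOpen (m := 1) hU (by norm_num)).differentiableOn (by norm_num)
  have hderiv : ∀ t ∈ V, HasDerivAt (f ∘ c) (fderiv ℝ f (c t) v) t := fun t ht =>
    hasDerivAt_comp_add_smul (hf1.differentiableAt (hU.mem_nhds ht))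
  have hderiv2 : ∀ t ∈ V, HasDerivAt (fun t => fderiv ℝ f (c t) v)
      (iteratedFDeriv ℝ 2 f (c t) ![v, v]) t := fun t ht =>
    hasDerivAt_fderiv_comp_add_smul (hf2.differentiableAt (hU.mem_nhds ht))
  have hg : ContDiffOn ℝ 2 (f ∘ c) (uIcc 0 a) := by
    rw [uIcc_of_le ha.le]
    exact hf.comp (by fun_prop : ContDiff ℝ 2 c).contDiffOn hIccV
  obtain ⟨θ, hθ, hTaylor⟩ := taylor_mean_remainder_lagrange_iteratedDeriv (n := 1) ha.ne hg
  rw [uIoo_of_le ha.le] at hθ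
  have hθV : θ ∈ V := hIccV (Ioo_subset_Icc_self hθ)
  have h0 : (0 : ℝ) ∈ Icc 0 a := ⟨le_rfl, ha.le⟩
  have hpoly : taylorWithinEval (f ∘ c) 1 (uIcc 0 a) 0 a = f x + a * fderiv ℝ f x v := by
    rw [uIcc_of_le ha.le, taylorWithinEval_succ, taylor_within_zero_eval,
      iteratedDerivWithin_one,
      ((hderiv 0 (hIccV h0)).hasDerivWithinAt).derivWithin (uniqueDiffOn_Icc ha 0 h0)]
    simp [c]
  have hsecond : iteratedDeriv 2 (f ∘ c) θ = iteratedFDeriv ℝ 2 f (c θ) ![v, v] := by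
    have hev : deriv (f ∘ c) =ᶠ[nhds θ] fun t => fderiv ℝ f (c t) v :=
      Filter.eventually_of_mem (hVopen.mem_nhds hθV) fun t ht => (hderiv t ht).deriv
    rw [iteratedDeriv_succ, iteratedDeriv_one, hev.deriv_eq]
    exact (hderiv2 θ hθV).deriv
  refine ⟨θ, hθ, ?_⟩
  rw [hpoly, hsecond] at hTaylor
  simp only [Function.comp, c, Nat.factorial, sub_zero] at hTaylor
  linear_combination hTaylor

theorem abs_taylor_remainder_add_smul_le (hU : IsOpen U) (hf : ContDiffOn ℝ 2 f U) (ha : 0 < a)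
    (hseg : segment ℝ x (x + a • v) ⊆ U) {M : ℝ}
    (hM : ∀ θ ∈ Icc 0 a, |iteratedFDeriv ℝ 2 f (x + θ • v) ![v, v]| ≤ M) :
    |f (x + a • v) - f x - a * fderiv ℝ f x v| ≤ a ^ 2 / 2 * M := by
  obtain ⟨θ, hθ, hTaylor⟩ := exists_taylor_mean_remainder_lagrange_add_smul hU hf ha hseg
  rw [hTaylor, abs_mul, abs_of_nonneg (by positivity)]
  gcongr
  exact hM θ (Ioo_subset_Icc_self hθ)

end TaylorAlongSegment

theorem ContDiffOn.continuousOn_iteratedFDeriv_of_isOpen {E F : Type*} [NormedAddCommGroup E]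
    [NormedSpace ℝ E] [NormedAddCommGroup F] [NormedSpace ℝ F] {f : E → F} {U : Set E} {n : ℕ}
    (hf : ContDiffOn ℝ n f U) (hU : IsOpen U) : ContinuousOn (iteratedFDeriv ℝ n f) U :=
  (hf.continuousOn_iteratedFDerivWithin le_rfl hU.uniqueDiffOn).congr fun _ hx =>
    (iteratedFDerivWithin_of_isOpen n hU hx).symm

theorem fderiv_euclidean_apply {E ι : Type*} [NormedAddCommGroup E] [NormedSpace ℝ E]
    [Fintype ι]
    {r : E → EuclideanSpace ℝ ι} {x : E} (hr : DifferentiableAt ℝ r x) (i : ι) (v : E) :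
    fderiv ℝ (fun y => r y i) x v = fderiv ℝ r x v i := by
  have hcomponent : fderiv ℝ (fun y => r y i) x = PiLp.proj 2 _ i ∘L fderiv ℝ r x :=
    ((PiLp.hasFDerivAt_apply (𝕜 := ℝ) 2 (r x) i).comp x hr.hasFDerivAt).fderiv
  rw [hcomponent, ContinuousLinearMap.comp_apply, PiLp.proj_apply]

theorem EuclideanSpace.norm_le_sqrt_card_mul {ι : Type*} [Fintype ι] {x : EuclideanSpace ℝ ι}
    {B : ℝ} (hx : ∀ i, |x i| ≤ B) : ‖x‖ ≤ √(Fintype.card ι) * B := by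
  rcases isEmpty_or_nonempty ι with hι | ⟨⟨i⟩⟩
  · simp [Subsingleton.elim x 0]
  calc ‖x‖ = √(∑ j, |x j| ^ 2) := by simp [EuclideanSpace.norm_eq]
    _ ≤ √(∑ _ : ι, B ^ 2) := by gcongr with j; exact hx j
    _ = √(Fintype.card ι) * B := by
      rw [Finset.sum_const, Finset.card_univ, nsmul_eq_mul, Real.sqrt_mul (Nat.cast_nonneg _),
        Real.sqrt_sq ((abs_nonneg _).trans (hx i))]

theorem le_iSup_biSup_of_continuousOn {ι X : Type*} [Finite ι] [TopologicalSpace X] {K : Set X}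
    (hK : IsCompact K) {q : ι → X → ℝ} (hq : ∀ i, ContinuousOn (q i) K) (i : ι) {x : X}
    (hx : x ∈ K) : q i x ≤ ⨆ i, ⨆ x ∈ K, q i x := by
  have hbdd : BddAbove (⋃ y, range fun _ : y ∈ K => q i y) := by
    obtain ⟨C, hC⟩ := (hK.image_of_continuousOn (hq i)).bddAbove
    refine ⟨C, ?_⟩
    simp only [upperBounds, mem_iUnion, mem_range]
    rintro _ ⟨y, hy, rfl⟩
    exact hC (mem_image_of_mem _ hy)
  exact (le_ciSup₂ (f := fun y (_ : y ∈ K) => q i y) hbdd x hx).trans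
    (le_ciSup (f := fun j => ⨆ y ∈ K, q j y) (finite_range _).bddAbove i)

theorem spacing_error_bound_directional_general
    (m n : ℕ)
    (r : EuclideanSpace ℝ (Fin m) → EuclideanSpace ℝ (Fin n))
    (U : Set (EuclideanSpace ℝ (Fin m))) (hU : IsOpen U)
    (hr : ContDiffOn ℝ 2 r U)
    (ξ : EuclideanSpace ℝ (Fin m))
    (s : EuclideanSpace ℝ (Fin m))
    (h : ℝ) (hh : 0 < h)
    (hDs : fderiv ℝ r ξ s ≠ 0)
    (α : ℝ) (hα : α = h / ‖fderiv ℝ r ξ s‖)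
    (η : EuclideanSpace ℝ (Fin m)) (hη : η = ξ + α • s)
    (hseg : segment ℝ ξ η ⊆ U) :
    |h - ‖r η - r ξ‖| ≤
      Real.sqrt n / 2 * h ^ 2 *
        (⨆ i : Fin n, ⨆ θ ∈ Set.Icc (0 : ℝ) α,
          |iteratedFDeriv ℝ 2 (fun x => r x i) (ξ + θ • s) ![s, s]|) /
        ‖fderiv ℝ r ξ s‖ ^ 2 := by
  subst hη
  have hd : 0 < ‖fderiv ℝ r ξ s‖ := norm_pos_iff.mpr hDs
  have hα0 : 0 < α := hα ▸ div_pos hh hd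
  have hdiff : DifferentiableAt ℝ r ξ :=
    (hr.differentiableOn (by norm_num)).differentiableAt
      (hU.mem_nhds (hseg (left_mem_segment ..)))
  have hri : ∀ i, ContDiffOn ℝ 2 (fun x => r x i) U := contDiffOn_euclidean.1 hr
  have hsecond_cont : ∀ i, ContinuousOn
      (fun θ : ℝ => |iteratedFDeriv ℝ 2 (fun x => r x i) (ξ + θ • s) ![s, s]|) (Icc 0 α) :=
    fun i => (continuous_abs.comp (continuous_eval_const _)).comp_continuousOn
      (((hri i).continuousOn_iteratedFDeriv_of_isOpen hU).comp (by fun_prop)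
        fun θ hθ => hseg (add_smul_mem_segment hα0 hθ))
  set M := ⨆ i : Fin n, ⨆ θ ∈ Icc (0 : ℝ) α,
    |iteratedFDeriv ℝ 2 (fun x => r x i) (ξ + θ • s) ![s, s]|
  have hremainder (i : Fin n) :
      |(r (ξ + α • s) - r ξ - α • fderiv ℝ r ξ s) i| ≤ α ^ 2 / 2 * M := by
    simpa only [PiLp.sub_apply, PiLp.smul_apply, smul_eq_mul, fderiv_euclidean_apply hdiff]
      using abs_taylor_remainder_add_smul_le hU (hri i) hα0 hseg
        fun θ hθ => le_iSup_biSup_of_continuousOn isCompact_Icc hsecond_cont i hθ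
  have hlinear : ‖α • fderiv ℝ r ξ s‖ = h := by
    rw [norm_smul, Real.norm_of_nonneg hα0.le, hα, div_mul_cancel₀ _ hd.ne']
  calc |h - ‖r (ξ + α • s) - r ξ‖|
      ≤ ‖r (ξ + α • s) - r ξ - α • fderiv ℝ r ξ s‖ :=
        hlinear ▸ (abs_norm_sub_norm_le _ _).trans_eq (norm_sub_rev _ _)
    _ ≤ √n * (α ^ 2 / 2 * M) := by
        simpa using EuclideanSpace.norm_le_sqrt_card_mul hremainder
    _ = _ := by
        rw [hα]
        field_simp

/-- First (direction-dependent) estimate of Proposition 2.1: the node-spacing error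
`Δh(ξ,s) = h − ‖r(η) − r(ξ)‖` for the candidate `η = ξ + (h/‖Dr(ξ)s‖) • s` is bounded by
`(√n / 2) · h² · max_i sup_{θ ∈ [0,α]} |D²r_i(ξ+θs)(s,s)| / ‖Dr(ξ)s‖²`. -/
theorem spacing_error_bound_directional
    (m n : ℕ) (hm : 1 ≤ m) (hn : 1 ≤ n)
    (r : EuclideanSpace ℝ (Fin m) → EuclideanSpace ℝ (Fin n))
    (U : Set (EuclideanSpace ℝ (Fin m))) (hU : IsOpen U)
    (hr : ContDiffOn ℝ 2 r U)
    (ξ : EuclideanSpace ℝ (Fin m)) (hξ : ξ ∈ U)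
    (s : EuclideanSpace ℝ (Fin m)) (hs : ‖s‖ = 1)
    (h : ℝ) (hh : 0 < h)
    (hDs : fderiv ℝ r ξ s ≠ 0)
    (α : ℝ) (hα : α = h / ‖fderiv ℝ r ξ s‖)
    (η : EuclideanSpace ℝ (Fin m)) (hη : η = ξ + α • s)
    (hseg : segment ℝ ξ η ⊆ U) :
    |h - ‖r η - r ξ‖| ≤
      Real.sqrt n / 2 * h ^ 2 *
        (⨆ i : Fin n, ⨆ θ ∈ Set.Icc (0 : ℝ) α,
          |iteratedFDeriv ℝ 2 (fun x => r x i) (ξ + θ • s) ![s, s]|) /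
        ‖fderiv ℝ r ξ s‖ ^ 2 :=
  spacing_error_bound_directional_general m n r U hU hr ξ s h hh hDs α hα η hη hseg
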